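/- Let L be a closed subgroup of SL(2,ℝ) which is not compact. Then there is an infinite sequence (g_n) in L such that for every M > 0 and every ε > 0 there is N with the property that for all n ≥ N, the set R₂ = { ρ ∈ ℝ : κ_{g_n}(ρ) ≤ M } has λ(R₂) ≤ ε, while 0 < κ_{g_n}(ρ) for all ρ; i.e. κ_{g_n} exceeds M on the complementary region R₁ whose complement has λ-measure at most ε. -/

import Mathlib

open MeasureTheory Matrix

noncomputable section

/-- `SL(2,ℝ)`, the group of real 2×2 matrices of determinant 1. -/
abbrev SL2 := Matrix.SpecialLinearGroup (Fin 2) ℝ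

/-- The Cauchy probability measure on `ℝ`, with density `ρ ↦ 1/(π(1+ρ²))` with
respect to Lebesgue measure. -/
def cauchyM : Measure ℝ :=
  volume.withDensity fun ρ => ENNReal.ofReal (1 / (Real.pi * (1 + ρ ^ 2)))

/-- The Möbius right action `ρ·g = (aρ+c)/(bρ+d)` of `g = [[a,b],[c,d]] ∈ SL(2,ℝ)`
on `ℝ` (here `a = g 0 0`, `b = g 0 1`, `c = g 1 0`, `d = g 1 1`). -/
def mob (g : SL2) (ρ : ℝ) : ℝ :=
  (g.1 0 0 * ρ + g.1 1 0) / (g.1 0 1 * ρ + g.1 1 1)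

/-- The factor `κ_g(ρ) = ((aρ+c)² + (bρ+d)²)/(ρ²+1)`. -/
def kappa (g : SL2) (ρ : ℝ) : ℝ :=
  ((g.1 0 0 * ρ + g.1 1 0) ^ 2 + (g.1 0 1 * ρ + g.1 1 1) ^ 2) / (ρ ^ 2 + 1)


/-- The topology on `SL(2,ℝ)` induced from `ℝ⁴` via the matrix entries. -/
instance : TopologicalSpace SL2 := instTopologicalSpaceSubtype

/-! A closed non-compact subgroup of `SL(2,ℝ)` is unbounded, so it contains `g_n` with
`‖g_n‖² → ∞`. If the first row of `g = [[a,b],[c,d]]` carries at least half of `T = ‖g‖²`, then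
`κ_g(ρ) ≤ M` is a quadratic inequality in `ρ` whose discriminant is at most `MT` because
`ad - bc = 1`; it confines `ρ` to an interval of length `O(√(M/T))`, and the Cauchy density is at
most `1/π`. Otherwise pass to `wg` for the quarter turn `w`: its first row is the second row of `g`,
`κ_{wg}(ρ) = κ_g(-1/ρ)`, and `λ` is invariant under `ρ ↦ -1/ρ`. -/

open Filter Topology

def frobNormSq (g : SL2) : ℝ :=
  g.1 0 0 ^ 2 + g.1 0 1 ^ 2 + g.1 1 0 ^ 2 + g.1 1 1 ^ 2

lemma SL2.det_eq_one (g : SL2) : g.1 0 0 * g.1 1 1 - g.1 0 1 * g.1 1 0 = 1 := by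
  rw [← Matrix.det_fin_two]
  exact g.2

lemma two_le_frobNormSq (g : SL2) : 2 ≤ frobNormSq g := by
  unfold frobNormSq
  nlinarith [g.det_eq_one, sq_nonneg (g.1 0 0 - g.1 1 1), sq_nonneg (g.1 0 1 + g.1 1 0)]

lemma sq_apply_le_frobNormSq (g : SL2) (i j : Fin 2) : g.1 i j ^ 2 ≤ frobNormSq g := by
  unfold frobNormSq
  fin_cases i <;> fin_cases j <;> simp <;>
    linarith [sq_nonneg (g.1 0 0), sq_nonneg (g.1 0 1), sq_nonneg (g.1 1 0), sq_nonneg (g.1 1 1)]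

lemma kappa_pos (g : SL2) (ρ : ℝ) : 0 < kappa g ρ := by
  have hdet := g.det_eq_one
  refine div_pos ?_ (by positivity)
  by_contra! h
  have h₁ : g.1 0 0 * ρ + g.1 1 0 = 0 := by nlinarith
  have h₂ : g.1 0 1 * ρ + g.1 1 1 = 0 := by nlinarith
  linarith [congrArg (g.1 0 1 * ·) h₁, congrArg (g.1 0 0 * ·) h₂]

lemma measurable_kappa (g : SL2) : Measurable (kappa g) := by
  unfold kappa
  fun_prop

lemma isClosedEmbedding_val_SL2 :
    Topology.IsClosedEmbedding (Subtype.val : SL2 → Matrix (Fin 2) (Fin 2) ℝ) :=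
  (isClosed_eq (continuous_id.matrix_det) continuous_const).isClosedEmbedding_subtypeVal

lemma exists_lt_frobNormSq_of_not_isCompact {s : Set SL2} (hs : IsClosed s)
    (hnc : ¬ IsCompact s) (C : ℝ) : ∃ g ∈ s, C < frobNormSq g := by
  by_contra! hbdd
  refine hnc (isClosedEmbedding_val_SL2.isCompact_iff.2 ?_)
  refine (isCompact_univ_pi fun _ => isCompact_univ_pi fun _ => isCompact_Icc (a := -(C + 1))
    (b := C + 1)).of_isClosed_subset (isClosedEmbedding_val_SL2.isClosedMap _ hs) ?_
  rintro _ ⟨g, hg, rfl⟩ i - j -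
  have := (sq_apply_le_frobNormSq g i j).trans (hbdd g hg)
  constructor <;> nlinarith [sq_nonneg (g.1 i j + 1), sq_nonneg (g.1 i j - 1)]

lemma cauchyM_singleton (x : ℝ) : cauchyM {x} = 0 :=
  withDensity_absolutelyContinuous _ _ Real.volume_singleton

lemma cauchyM_le_volume (E : Set ℝ) : cauchyM E ≤ ENNReal.ofReal (1 / Real.pi) * volume E := by
  rw [cauchyM, withDensity_apply', ← setLIntegral_const]
  refine lintegral_mono fun ρ => ENNReal.ofReal_le_ofReal ?_
  gcongr
  nlinarith [Real.pi_pos, sq_nonneg ρ]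

/-- The change of variables `ρ ↦ -ρ⁻¹` has Jacobian `ρ⁻²`, which exactly converts the density
`1/(π(1+ρ⁻²))` back into `1/(π(1+ρ²))`. -/
lemma measurePreserving_neg_inv_cauchyM :
    MeasurePreserving (fun ρ : ℝ => -ρ⁻¹) cauchyM cauchyM := by
  set f : ℝ → ℝ := fun ρ => -ρ⁻¹
  have hf : Function.Involutive f := fun ρ => by simp [f]
  have hmeas : Measurable f := measurable_inv.neg
  refine ⟨hmeas, Measure.ext fun t ht => ?_⟩
  rw [Measure.map_apply hmeas ht]
  set s := f ⁻¹' t \ {0}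
  have hs : MeasurableSet s := (hmeas ht).diff (measurableSet_singleton 0)
  have himage : f '' s = t \ {0} := by
    rw [Set.image_eq_preimage_of_inverse hf.leftInverse hf.rightInverse]
    ext ρ
    simp [s, f]
  have hderiv : ∀ x ∈ s, HasDerivWithinAt f ((x ^ 2)⁻¹) s x := fun x hx => by
    simpa using (hasDerivAt_inv hx.2).fun_neg.hasDerivWithinAt
  have hdensity : ∀ x ∈ s, ENNReal.ofReal |(x ^ 2)⁻¹| *
      ENNReal.ofReal (1 / (Real.pi * (1 + f x ^ 2))) =
      ENNReal.ofReal (1 / (Real.pi * (1 + x ^ 2))) := fun x hx => by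
    have : x ≠ 0 := hx.2
    rw [← ENNReal.ofReal_mul (abs_nonneg _), abs_of_nonneg (by positivity)]
    congr 1
    simp only [f, neg_sq, inv_pow]
    field_simp
    ring
  calc cauchyM (f ⁻¹' t) = cauchyM s := (measure_sdiff_null (cauchyM_singleton 0)).symm
    _ = cauchyM (f '' s) := by
      rw [cauchyM, withDensity_apply', withDensity_apply',
        lintegral_image_eq_lintegral_abs_deriv_mul hs hderiv (hf.injective.injOn),
        setLIntegral_congr_fun hs hdensity]
    _ = cauchyM t := by rw [himage, measure_sdiff_null (cauchyM_singleton 0)]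

def quarterTurn : SL2 := ⟨!![0, 1; -1, 0], by simp [Matrix.det_fin_two]⟩

lemma quarterTurn_mul_apply (g : SL2) (j : Fin 2) :
    (quarterTurn * g).1 0 j = g.1 1 j ∧ (quarterTurn * g).1 1 j = -g.1 0 j := by
  change (quarterTurn.1 * g.1) 0 j = _ ∧ (quarterTurn.1 * g.1) 1 j = _
  simp [quarterTurn, Matrix.mul_apply, Fin.sum_univ_two]

lemma frobNormSq_quarterTurn_mul (g : SL2) : frobNormSq (quarterTurn * g) = frobNormSq g := by
  simp only [frobNormSq, quarterTurn_mul_apply]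
  ring

lemma kappa_quarterTurn_mul (g : SL2) {ρ : ℝ} (hρ : ρ ≠ 0) :
    kappa (quarterTurn * g) ρ = kappa g (-ρ⁻¹) := by
  simp only [kappa, quarterTurn_mul_apply]
  field_simp
  ring

lemma abs_mul_add_le_of_kappa_le (g : SL2) {M ρ : ℝ} (hM : M ≤ g.1 0 0 ^ 2 + g.1 0 1 ^ 2)
    (h : kappa g ρ ≤ M) :
    |(g.1 0 0 ^ 2 + g.1 0 1 ^ 2 - M) * ρ + (g.1 0 0 * g.1 1 0 + g.1 0 1 * g.1 1 1)|
      ≤ √(M * frobNormSq g) := by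
  rw [← Real.sqrt_sq_eq_abs]
  refine Real.sqrt_le_sqrt ?_
  rw [kappa, div_le_iff₀ (by positivity)] at h
  have hdet := g.det_eq_one
  unfold frobNormSq
  nlinarith [mul_nonneg (sub_nonneg.2 hM) (sub_nonneg.2 h), sq_nonneg M]

lemma cauchyM_kappa_le_le_of_frobNormSq_le_two_mul {g : SL2} {M : ℝ}
    (hM : 4 * M ≤ frobNormSq g)
    (hrow : frobNormSq g ≤ 2 * (g.1 0 0 ^ 2 + g.1 0 1 ^ 2)) :
    cauchyM {ρ | kappa g ρ ≤ M} ≤ ENNReal.ofReal (8 / Real.pi * √(M / frobNormSq g)) := by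
  set T := frobNormSq g
  set A := g.1 0 0 ^ 2 + g.1 0 1 ^ 2 - M
  set E := g.1 0 0 * g.1 1 0 + g.1 0 1 * g.1 1 1
  have hT : 0 < T := by linarith [two_le_frobNormSq g]
  have hA : T / 4 ≤ A := by linarith
  have hA₀ : 0 < A := by linarith
  have hsub : {ρ | kappa g ρ ≤ M} ⊆ Set.Icc ((-E - √(M * T)) / A) ((-E + √(M * T)) / A) := by
    intro ρ hρ
    have := abs_le.1 (abs_mul_add_le_of_kappa_le g (by linarith) hρ)
    constructor
    · rw [div_le_iff₀ hA₀]; linarith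
    · rw [le_div_iff₀ hA₀]; linarith
  have hsqrt : √(M * T) = √(M / T) * T := by
    rw [← Real.sqrt_sq hT.le, ← Real.sqrt_mul' _ (sq_nonneg T), Real.sqrt_sq hT.le]
    field_simp
  have hlen : (-E + √(M * T)) / A - (-E - √(M * T)) / A ≤ 8 * √(M / T) := by
    rw [div_sub_div_same, div_le_iff₀ hA₀, hsqrt]
    nlinarith [Real.sqrt_nonneg (M / T)]
  calc cauchyM {ρ | kappa g ρ ≤ M}
      ≤ ENNReal.ofReal (1 / Real.pi) *
          volume (Set.Icc ((-E - √(M * T)) / A) ((-E + √(M * T)) / A)) :=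
        (measure_mono hsub).trans (cauchyM_le_volume _)
    _ ≤ ENNReal.ofReal (1 / Real.pi) * ENNReal.ofReal (8 * √(M / T)) := by
        rw [Real.volume_Icc]
        gcongr
    _ = ENNReal.ofReal (8 / Real.pi * √(M / T)) := by
        rw [← ENNReal.ofReal_mul (by positivity)]
        ring_nf

lemma cauchyM_kappa_le_le {g : SL2} {M : ℝ} (hM : 4 * M ≤ frobNormSq g) :
    cauchyM {ρ | kappa g ρ ≤ M} ≤ ENNReal.ofReal (8 / Real.pi * √(M / frobNormSq g)) := by
  by_cases hrow : frobNormSq g ≤ 2 * (g.1 0 0 ^ 2 + g.1 0 1 ^ 2)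
  · exact cauchyM_kappa_le_le_of_frobNormSq_le_two_mul hM hrow
  have hrow' : frobNormSq (quarterTurn * g) ≤
      2 * ((quarterTurn * g).1 0 0 ^ 2 + (quarterTurn * g).1 0 1 ^ 2) := by
    simp only [frobNormSq, quarterTurn_mul_apply] at hrow ⊢
    linarith
  have hsub : (fun ρ : ℝ => -ρ⁻¹) ⁻¹' {ρ | kappa g ρ ≤ M} \ {0} ⊆
      {ρ | kappa (quarterTurn * g) ρ ≤ M} := fun ρ ⟨hρ, hρ₀⟩ => by
    simpa [kappa_quarterTurn_mul g hρ₀] using hρ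
  rw [← frobNormSq_quarterTurn_mul g] at hM ⊢
  calc cauchyM {ρ | kappa g ρ ≤ M}
      = cauchyM ((fun ρ : ℝ => -ρ⁻¹) ⁻¹' {ρ | kappa g ρ ≤ M} \ {0}) := by
        rw [measure_sdiff_null (cauchyM_singleton 0),
          measurePreserving_neg_inv_cauchyM.measure_preimage
            (measurableSet_le (measurable_kappa g) measurable_const).nullMeasurableSet]
    _ ≤ _ :=
      (measure_mono hsub).trans (cauchyM_kappa_le_le_of_frobNormSq_le_two_mul hM hrow')

/-- If `L` is a closed non-compact subgroup of `SL(2,ℝ)`, there is a sequence `(g_n)`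
in `L` such that for every `M > 0` and `ε > 0`, eventually in `n` the region
`R₂ = {ρ : κ_{g_n}(ρ) ≤ M}` has `λ(R₂) ≤ ε` while `κ_{g_n} > 0` everywhere; i.e.
`κ_{g_n}` exceeds `M` on the complementary region `R₁` whose complement has λ-measure
at most `ε`. -/
theorem kappa_blowup_of_noncompact_closed_subgroup
    (L : Subgroup SL2) (hclosed : IsClosed (L : Set SL2))
    (hnc : ¬ IsCompact (L : Set SL2)) :
    ∃ g : ℕ → SL2, (∀ n, g n ∈ L) ∧
      ∀ M > (0 : ℝ), ∀ ε > (0 : ℝ), ∃ N : ℕ, ∀ n ≥ N,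
        cauchyM {ρ : ℝ | kappa (g n) ρ ≤ M} ≤ ENNReal.ofReal ε ∧
        ∀ ρ : ℝ, 0 < kappa (g n) ρ := by
  choose g hgL hg using fun n : ℕ => exists_lt_frobNormSq_of_not_isCompact hclosed hnc n
  have hT : Tendsto (fun n => frobNormSq (g n)) atTop atTop :=
    tendsto_atTop_mono (fun n => (hg n).le) tendsto_natCast_atTop_atTop
  refine ⟨g, hgL, fun M _ ε hε => ?_⟩
  have hbound : Tendsto (fun n => 8 / Real.pi * √(M / frobNormSq (g n))) atTop (𝓝 0) := by
    simpa using ((Real.continuous_sqrt.tendsto 0).comp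
      (tendsto_const_nhds.div_atTop hT)).const_mul (8 / Real.pi)
  obtain ⟨N, hN⟩ := eventually_atTop.1 <|
    (hT.eventually_ge_atTop (4 * M)).and (hbound.eventually_le_const hε)
  exact ⟨N, fun n hn => ⟨(cauchyM_kappa_le_le (hN n hn).1).trans
    (ENNReal.ofReal_le_ofReal (hN n hn).2), kappa_pos (g n)⟩⟩
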